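/- Proposition (variance): the variance of the GRL distribution satisfies ∫_{0}^{∞} t² · f(t) dt − μ² = (λ^(2/α)/(α²(λ−1)²)) · [2α(λ−1) · Γ(2/α) · (λ + 2/α − 1) − Γ(1/α)² · (λ + 1/α − 1)²], where μ = (λ^(1/α)/(α(λ−1))) · Γ(1/α) · (λ + 1/α − 1) and Γ denotes the Euler gamma function. -/

import Mathlib

/-!
Splitting the factor `λ + t^α/λ - 2` reduces every moment `∫ t^r f(t) dt` to two Weibull-type
integrals `∫ t^(s-1) exp(-t^α/λ) dt = λ^(s/α) Γ(s/α) / α`, which combine to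
`E[T^r] = λ^(r/α) Γ(r/α + 1) (λ + r/α - 1) / (λ - 1)`. The mean `μ` is the case `r = 1`; the
variance follows from the case `r = 2` and `Γ(2/α + 1) = (2/α) Γ(2/α)`.
-/

open Real MeasureTheory Set

theorem integrableOn_rpow_sub_one_mul_exp_neg_rpow_div {p s lam : ℝ} (hp : 0 < p) (hs : 0 < s)
    (hlam : 0 < lam) :
    IntegrableOn (fun t : ℝ => t ^ (s - 1) * exp (-(t ^ p / lam))) (Ioi 0) := by
  simpa only [neg_mul, one_div_mul_eq_div] using
    integrableOn_rpow_mul_exp_neg_mul_rpow (s := s - 1) (by linarith) hp (one_div_pos.2 hlam)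

theorem integral_rpow_sub_one_mul_exp_neg_rpow_div {p s lam : ℝ} (hp : 0 < p) (hs : 0 < s)
    (hlam : 0 < lam) :
    ∫ t in Ioi 0, t ^ (s - 1) * exp (-(t ^ p / lam)) = lam ^ (s / p) / p * Gamma (s / p) := by
  have h := integral_rpow_mul_exp_neg_mul_rpow (q := s - 1) hp (by linarith) (one_div_pos.2 hlam)
  simp only [neg_mul, one_div_mul_eq_div, sub_add_cancel] at h
  rw [h, one_div, inv_rpow hlam.le, ← rpow_neg hlam.le, neg_div, neg_neg]
  ring

noncomputable def grlDensity (lam α t : ℝ) : ℝ :=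
  α / (lam * (lam - 1)) * t ^ (α - 1) * (lam + t ^ α / lam - 2) * exp (-(t ^ α / lam))

theorem integral_rpow_mul_grlDensity {lam α r : ℝ} (hlam : 0 < lam) (hlam1 : lam ≠ 1) (hα : 0 < α)
    (hr : -α < r) :
    ∫ t in Ioi 0, t ^ r * grlDensity lam α t
      = lam ^ (r / α) * Gamma (r / α + 1) * (lam + r / α - 1) / (lam - 1) := by
  set e : ℝ → ℝ := fun t => exp (-(t ^ α / lam))
  have hsplit : EqOn (fun t => t ^ r * grlDensity lam α t)
      (fun t => α * (lam - 2) / (lam * (lam - 1)) * (t ^ (r + α - 1) * e t)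
        + α / (lam ^ 2 * (lam - 1)) * (t ^ (r + 2 * α - 1) * e t)) (Ioi 0) := by
    intro t (ht : 0 < t)
    have h1 : t ^ (r + α - 1) = t ^ r * t ^ (α - 1) := by
      rw [← rpow_add ht]; ring_nf
    have h2 : t ^ (r + 2 * α - 1) = t ^ r * t ^ (α - 1) * t ^ α := by
      rw [← rpow_add ht, ← rpow_add ht]; ring_nf
    simp only [grlDensity, e, h1, h2]
    field_simp
    ring
  have hs1 : 0 < r + α := by linarith
  have hs2 : 0 < r + 2 * α := by linarith
  rw [setIntegral_congr_fun measurableSet_Ioi hsplit, integral_add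
    ((integrableOn_rpow_sub_one_mul_exp_neg_rpow_div hα hs1 hlam).const_mul _)
    ((integrableOn_rpow_sub_one_mul_exp_neg_rpow_div hα hs2 hlam).const_mul _),
    integral_const_mul, integral_const_mul,
    integral_rpow_sub_one_mul_exp_neg_rpow_div hα hs1 hlam,
    integral_rpow_sub_one_mul_exp_neg_rpow_div hα hs2 hlam]
  have hdiv1 : (r + α) / α = r / α + 1 := by field_simp
  have hdiv2 : (r + 2 * α) / α = r / α + 1 + 1 := by field_simp; ring
  have hpos : 0 < r / α + 1 := hdiv1 ▸ div_pos hs1 hα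
  have hpow1 : lam ^ (r / α + 1) = lam ^ (r / α) * lam := by rw [rpow_add hlam, rpow_one]
  have hpow2 : lam ^ (r / α + 1 + 1) = lam ^ (r / α) * lam ^ 2 := by
    rw [rpow_add hlam, hpow1, rpow_one]; ring
  rw [hdiv1, hdiv2, Gamma_add_one hpos.ne', hpow1, hpow2]
  field_simp
  ring

/-- The variance of the GRL distribution:
σ² = (λ^(2/α)/(α²(λ-1)²)) [2α(λ-1) Γ(2/α) (λ + 2/α - 1) - Γ(1/α)² (λ + 1/α - 1)²],
where μ is the mean. -/
theorem grl_variance (lam α : ℝ) (hlam : 2 ≤ lam) (hα : 0 < α) (μ : ℝ)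
    (hμ : μ = (lam ^ ((1 : ℝ) / α) / (α * (lam - 1))) * Real.Gamma (1 / α) *
      (lam + 1 / α - 1)) :
    (∫ t in Set.Ioi (0 : ℝ),
      t ^ 2 * ((α / (lam * (lam - 1))) * t ^ (α - 1) * (lam + t ^ α / lam - 2) *
        Real.exp (-(t ^ α / lam)))) - μ ^ 2
      = (lam ^ ((2 : ℝ) / α) / (α ^ 2 * (lam - 1) ^ 2)) *
          (2 * α * (lam - 1) * Real.Gamma (2 / α) * (lam + 2 / α - 1)
            - Real.Gamma (1 / α) ^ 2 * (lam + 1 / α - 1) ^ 2) := by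
  have hlam0 : 0 < lam := by linarith
  have hmoment := integral_rpow_mul_grlDensity hlam0 (by linarith : lam ≠ 1) hα
    (r := 2) (by linarith)
  have hsq : lam ^ ((2 : ℝ) / α) = (lam ^ ((1 : ℝ) / α)) ^ 2 := by
    rw [← rpow_natCast, ← rpow_mul hlam0.le]; ring_nf
  simp only [rpow_two, grlDensity] at hmoment
  rw [hmoment, hμ, Gamma_add_one (by positivity), hsq]
  field_simp
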